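/- arXiv:2203.14408 — 2 statements merged into one kernel-verified Lean document; each statement's English description precedes it below -/
import Mathlib

section
/- Let A, B, C, D, F be real matrices of compatible sizes, s a complex number such that sI - A is invertible and I - DF is invertible, and suppose sI - A - BF(I - DF)⁻¹C is invertible. Define Q(s) = [D + C(sI - A)⁻¹B]F. Then I - Q(s) is invertible and (I - Q(s))⁻¹ = (I - DF)⁻¹ + (I - DF)⁻¹ C [sI - A - BF(I - DF)⁻¹C]⁻¹ B F (I - DF)⁻¹. -/
/-! With `E = 1 - DF` and `M = sI - A` one has `1 - Q(s) = E - C M⁻¹ (BF)`. The claimed formula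
is the Woodbury identity for this perturbation of `E`, and the matrix it has to invert,
`M - BF E⁻¹ C`, is exactly the closed-loop matrix `sI - A - BF(1 - DF)⁻¹C`. -/

open Matrix

namespace Matrix

variable {m n α : Type*} [Fintype m] [DecidableEq m] [Fintype n] [DecidableEq n] [CommRing α]

theorem isUnit_add_mul_mul (A : Matrix n n α) (U : Matrix n m α) (C : Matrix m m α)
    (V : Matrix m n α) (hA : IsUnit A) (hC : IsUnit C) (hAC : IsUnit (C⁻¹ + V * A⁻¹ * U)) :
    IsUnit (A + U * C * V) := by
  obtain ⟨_⟩ := hA.nonempty_invertible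
  obtain ⟨_⟩ := hC.nonempty_invertible
  obtain ⟨iAC⟩ := hAC.nonempty_invertible
  simp only [← invOf_eq_nonsing_inv] at iAC
  exact @isUnit_of_invertible _ _ _ (invertibleAddMulMul A U C V)

theorem isUnit_sub_mul_inv_mul_and_inv_eq (E : Matrix n n α) (W : Matrix n m α)
    (M : Matrix m m α) (V : Matrix m n α) (hE : IsUnit E) (hM : IsUnit M)
    (hK : IsUnit (M - V * E⁻¹ * W)) :
    IsUnit (E - W * M⁻¹ * V) ∧
      (E - W * M⁻¹ * V)⁻¹ = E⁻¹ + E⁻¹ * W * (M - V * E⁻¹ * W)⁻¹ * V * E⁻¹ := by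
  have hperturb : E - W * M⁻¹ * V = E + -W * M⁻¹ * V := by
    rw [Matrix.neg_mul, Matrix.neg_mul, sub_eq_add_neg]
  have hinner : M⁻¹⁻¹ + V * E⁻¹ * -W = M - V * E⁻¹ * W := by
    rw [nonsing_inv_nonsing_inv M ((isUnit_iff_isUnit_det M).mp hM), Matrix.mul_neg,
      sub_eq_add_neg]
  have hMinv : IsUnit M⁻¹ := isUnit_nonsing_inv_iff.mpr hM
  rw [hperturb]
  refine ⟨isUnit_add_mul_mul E (-W) M⁻¹ V hE hMinv (hinner ▸ hK), ?_⟩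
  rw [add_mul_mul_inv_eq_sub E (-W) M⁻¹ V hE hMinv (hinner ▸ hK), hinner]
  simp only [Matrix.mul_neg, Matrix.neg_mul, sub_neg_eq_add]

end Matrix

/-- Key identity in the proof that the interconnection formula subsumes Mason's Gain
Formula: with `Q(s) = [D + C(sI - A)⁻¹B]F`, if `sI - A`, `I - DF` and
`sI - A - BF(I - DF)⁻¹C` are invertible, then `I - Q(s)` is invertible and
`(I - Q(s))⁻¹ = (I - DF)⁻¹ + (I - DF)⁻¹C[sI - A - BF(I - DF)⁻¹C]⁻¹BF(I - DF)⁻¹`. -/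
theorem stmt7 (n m p : ℕ)
    (A : Matrix (Fin n) (Fin n) ℂ) (B : Matrix (Fin n) (Fin m) ℂ)
    (C : Matrix (Fin p) (Fin n) ℂ) (D : Matrix (Fin p) (Fin m) ℂ)
    (F : Matrix (Fin m) (Fin p) ℂ) (s : ℂ)
    (hsA : IsUnit (s • (1 : Matrix (Fin n) (Fin n) ℂ) - A))
    (hDF : IsUnit (1 - D * F))
    (hcl : IsUnit (s • (1 : Matrix (Fin n) (Fin n) ℂ) - A
        - B * F * (1 - D * F)⁻¹ * C)) :
    IsUnit (1 - (D + C * (s • (1 : Matrix (Fin n) (Fin n) ℂ) - A)⁻¹ * B) * F) ∧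
    (1 - (D + C * (s • (1 : Matrix (Fin n) (Fin n) ℂ) - A)⁻¹ * B) * F)⁻¹
      = (1 - D * F)⁻¹
        + (1 - D * F)⁻¹ * C
          * (s • (1 : Matrix (Fin n) (Fin n) ℂ) - A - B * F * (1 - D * F)⁻¹ * C)⁻¹
          * B * F * (1 - D * F)⁻¹ := by
  have hQ : 1 - (D + C * (s • (1 : Matrix (Fin n) (Fin n) ℂ) - A)⁻¹ * B) * F
      = (1 - D * F) - C * (s • 1 - A)⁻¹ * (B * F) := by
    rw [Matrix.add_mul, sub_add_eq_sub_sub, Matrix.mul_assoc]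
  have hwoodbury := isUnit_sub_mul_inv_mul_and_inv_eq (1 - D * F) C _ (B * F) hDF hsA hcl
  rw [hQ]
  simpa only [Matrix.mul_assoc] using hwoodbury
end

section
/- Under the hypotheses of the previous identity, with additionally G of compatible size and P(s) = [D + C(sI - A)⁻¹B]G, the transfer matrix of the interconnected state-space realization equals Mason's formula: (I - DF)⁻¹C [sI - A - BF(I - DF)⁻¹C]⁻¹ B[I + F(I - DF)⁻¹D]G + (I - DF)⁻¹DG = (I - Q(s))⁻¹ P(s). -/
/-!
With `E = 1 - DF`, `X = sI - A` and `M = X - BFE⁻¹C`, one has `1 - Q = E - CX⁻¹(BF)`, which the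
Woodbury identity inverts as `E⁻¹ + E⁻¹CM⁻¹(BF)E⁻¹`. Multiplying out against `P = (D + CX⁻¹B)G`,
the resolvent identity `X⁻¹ + M⁻¹(X - M)X⁻¹ = M⁻¹` collapses the terms containing `X⁻¹` into the
state-space formula.
-/

namespace Matrix

variable {R : Type*} [CommRing R] {l m n p : Type*}
  [Fintype m] [DecidableEq m] [Fintype n] [DecidableEq n] [Fintype p] [DecidableEq p]

theorem inv_sub_mul_inv_mul_eq {E : Matrix p p R} {X : Matrix n n R} (C : Matrix p n R)
    (W : Matrix n p R) (hE : IsUnit E) (hX : IsUnit X) (hM : IsUnit (X - W * E⁻¹ * C)) :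
    (E - C * X⁻¹ * W)⁻¹ = E⁻¹ + E⁻¹ * C * (X - W * E⁻¹ * C)⁻¹ * W * E⁻¹ := by
  have hXX : X⁻¹⁻¹ = X := nonsing_inv_nonsing_inv X ((isUnit_iff_isUnit_det X).mp hX)
  have hM' : IsUnit (X⁻¹⁻¹ + W * E⁻¹ * -C) := by
    rwa [hXX, Matrix.mul_neg, ← sub_eq_add_neg]
  have h := add_mul_mul_inv_eq_sub E (-C) X⁻¹ W hE (isUnit_nonsing_inv_iff.mpr hX) hM'
  rw [hXX] at h
  simpa [sub_eq_add_neg, Matrix.neg_mul, Matrix.mul_neg] using h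

theorem closedLoop_transfer_eq_mason (X : Matrix n n R) (B : Matrix n m R) (C : Matrix p n R)
    (D : Matrix p m R) (F : Matrix m p R) (G : Matrix m l R) (hX : IsUnit X)
    (hE : IsUnit (1 - D * F)) (hM : IsUnit (X - B * F * (1 - D * F)⁻¹ * C)) :
    (1 - D * F)⁻¹ * C * (X - B * F * (1 - D * F)⁻¹ * C)⁻¹ * (B * (1 + F * (1 - D * F)⁻¹ * D) * G)
      + (1 - D * F)⁻¹ * D * G
    = (1 - (D + C * X⁻¹ * B) * F)⁻¹ * ((D + C * X⁻¹ * B) * G) := by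
  set E := 1 - D * F
  set M := X - B * F * E⁻¹ * C with hMdef
  have hQ : 1 - (D + C * X⁻¹ * B) * F = E - C * X⁻¹ * (B * F) := by
    simp only [E, Matrix.add_mul, Matrix.mul_assoc]; abel
  have resolvent : X⁻¹ + M⁻¹ * (B * F * E⁻¹ * C) * X⁻¹ = M⁻¹ := by
    have h := inv_sub_inv (A := M) (B := X) (by simp [hM, hX])
    rw [hMdef, sub_sub_cancel] at h
    rw [← h]; abel
  rw [hQ, inv_sub_mul_inv_mul_eq C (B * F) hE hX hM, ← hMdef]
  calc E⁻¹ * C * M⁻¹ * (B * (1 + F * E⁻¹ * D) * G) + E⁻¹ * D * G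
      = E⁻¹ * D * G + E⁻¹ * C * M⁻¹ * (B * F) * E⁻¹ * D * G + E⁻¹ * C * M⁻¹ * B * G := by
        simp only [Matrix.mul_add, Matrix.add_mul, Matrix.mul_one, Matrix.mul_assoc]; abel
    _ = E⁻¹ * D * G + E⁻¹ * C * M⁻¹ * (B * F) * E⁻¹ * D * G
          + E⁻¹ * C * (X⁻¹ + M⁻¹ * (B * F * E⁻¹ * C) * X⁻¹) * B * G := by rw [resolvent]
    _ = (E⁻¹ + E⁻¹ * C * M⁻¹ * (B * F) * E⁻¹) * ((D + C * X⁻¹ * B) * G) := by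
        simp only [Matrix.mul_add, Matrix.add_mul, Matrix.mul_assoc]

end Matrix

/-- Proposition (Mason): the transfer matrix of the interconnected state-space
realization equals Mason's Gain Formula `(I - Q(s))⁻¹P(s)`, where
`Q(s) = [D + C(sI - A)⁻¹B]F` and `P(s) = [D + C(sI - A)⁻¹B]G`. -/
theorem stmt8 (n m p k : ℕ)
    (A : Matrix (Fin n) (Fin n) ℂ) (B : Matrix (Fin n) (Fin m) ℂ)
    (C : Matrix (Fin p) (Fin n) ℂ) (D : Matrix (Fin p) (Fin m) ℂ)
    (F : Matrix (Fin m) (Fin p) ℂ) (G : Matrix (Fin m) (Fin k) ℂ) (s : ℂ)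
    (hsA : IsUnit (s • (1 : Matrix (Fin n) (Fin n) ℂ) - A))
    (hDF : IsUnit (1 - D * F))
    (hcl : IsUnit (s • (1 : Matrix (Fin n) (Fin n) ℂ) - A
        - B * F * (1 - D * F)⁻¹ * C)) :
    (1 - D * F)⁻¹ * C
        * (s • (1 : Matrix (Fin n) (Fin n) ℂ) - A - B * F * (1 - D * F)⁻¹ * C)⁻¹
        * (B * (1 + F * (1 - D * F)⁻¹ * D) * G)
      + (1 - D * F)⁻¹ * D * G
    = (1 - (D + C * (s • (1 : Matrix (Fin n) (Fin n) ℂ) - A)⁻¹ * B) * F)⁻¹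
        * ((D + C * (s • (1 : Matrix (Fin n) (Fin n) ℂ) - A)⁻¹ * B) * G) :=
  Matrix.closedLoop_transfer_eq_mason _ B C D F G hsA hDF hcl
end
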